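/- The connective ∘ is definable from △: for every BD valuation v and formula φ, v(∘φ) = v((△φ ∧ ¬△¬φ) ∨ (△¬φ ∧ ¬△φ)), i.e., ∘φ and (△φ ∧ ¬△¬φ) ∨ (△¬φ ∧ ¬△φ) are strongly equivalent. -/
import Mathlib


inductive FV | T | B | N | F
deriving DecidableEq

open FV

def fneg : FV → FV
  | T => F | F => T | B => B | N => N

def fand : FV → FV → FV
  | T, x => x
  | x, T => x
  | F, _ => F
  | _, F => F
  | B, B => B
  | N, N => N
  | B, N => F
  | N, B => F

def forr : FV → FV → FV
  | F, x => x
  | x, F => x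
  | T, _ => T
  | _, T => T
  | B, B => B
  | N, N => N
  | B, N => T
  | N, B => T

def fcirc : FV → FV
  | T => T | F => T | B => F | N => F

def ftri : FV → FV
  | T => T | B => T | N => F | F => F

inductive Fm
  | var : ℕ → Fm
  | neg : Fm → Fm
  | conj : Fm → Fm → Fm
  | disj : Fm → Fm → Fm
  | circ : Fm → Fm
  | tri : Fm → Fm

def eval (v : ℕ → FV) : Fm → FV
  | .var p => v p
  | .neg φ => fneg (eval v φ)
  | .conj φ χ => fand (eval v φ) (eval v χ)
  | .disj φ χ => forr (eval v φ) (eval v χ)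
  | .circ φ => fcirc (eval v φ)
  | .tri φ => ftri (eval v φ)

/-- designated values -/
def desig (x : FV) : Prop := x = T ∨ x = B

/-- formulas over {¬,∧,∨} -/
def isBD : Fm → Prop
  | .var _ => True
  | .neg φ => isBD φ
  | .conj φ χ => isBD φ ∧ isBD χ
  | .disj φ χ => isBD φ ∧ isBD χ
  | .circ _ => False
  | .tri _ => False

/-- formulas over {¬,∧,∨,∘} -/
def isCircFm : Fm → Prop
  | .var _ => True
  | .neg φ => isCircFm φ
  | .conj φ χ => isCircFm φ ∧ isCircFm χ
  | .disj φ χ => isCircFm φ ∧ isCircFm χ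
  | .circ φ => isCircFm φ
  | .tri _ => False

/-- formulas over {¬,∧,∨,△} -/
def isTriFm : Fm → Prop
  | .var _ => True
  | .neg φ => isTriFm φ
  | .conj φ χ => isTriFm φ ∧ isTriFm χ
  | .disj φ χ => isTriFm φ ∧ isTriFm χ
  | .circ _ => False
  | .tri φ => isTriFm φ

/-- BD entailment between single formulas -/
def ent (φ χ : Fm) : Prop := ∀ v, desig (eval v φ) → desig (eval v χ)

/-- classical (two-valued) evaluation of {¬,∧,∨}-formulas -/
def evalC (b : ℕ → Bool) : Fm → Bool
  | .var p => b p
  | .neg φ => !(evalC b φ)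
  | .conj φ χ => evalC b φ && evalC b χ
  | .disj φ χ => evalC b φ || evalC b χ
  | .circ φ => evalC b φ
  | .tri φ => evalC b φ


theorem circ_definable_from_tri (v : ℕ → FV) (φ : Fm) :
    eval v (.circ φ) =
      eval v (.disj (.conj (.tri φ) (.neg (.tri (.neg φ))))
                    (.conj (.tri (.neg φ)) (.neg (.tri φ)))) := by
  simp only [eval]; cases eval v φ <;> rfl
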